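/- arXiv:0704.2216 — 4 statements merged into one kernel-verified Lean document; each statement's English description precedes it below -/
import Mathlib

section
/- Let n ≥ 1 and let f ∈ ℂ[z₁,…,zₙ] be a nonzero polynomial whose support, viewed in ℝⁿ, is an affinely independent set (so that the Newton polytope Δ_f is a simplex whose vertex set is exactly the support of f; in particular f is maximally sparse). Then the amoeba 𝒜_f is solid: the number of connected components of ℝⁿ ∖ 𝒜_f equals the cardinality of the support of f. -/
/-!
Write `tᵦ(x) = |cᵦ| e^⟨β, x⟩` for the moduli of the terms of `f = ∑ cᵦ zᵝ` on `Log⁻¹ x`.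
If one term dominates, `2 tₐ(x) > ∑ tᵦ(x)`, then `x ∉ 𝒜_f` by the triangle inequality.
Otherwise the lengths `tᵦ(x)` close up to a polygon `∑ tᵦ uᵦ = 0` with `|uᵦ| = 1`, and since the
exponents are affinely independent the phases `⟨β, θ⟩` can be prescribed up to a common constant,
so `z = exp (x + iθ)` realises the polygon and `x ∈ 𝒜_f`. Hence `ℝⁿ ∖ 𝒜_f` is the disjoint union
of the open regions where a fixed term dominates. Each region is convex, being a sublevel set of
a sum of exponentials of linear forms, and nonempty, because affine independence yields a linear
form singling out its exponent; so these regions are exactly the components.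
-/

open MvPolynomial

/-- The amoeba of a nonzero polynomial `f ∈ ℂ[z₁,…,zₙ]`. -/
def amoeba {n : ℕ} (f : MvPolynomial (Fin n) ℂ) : Set (Fin n → ℝ) :=
  {x | ∃ z : Fin n → ℂ, (∀ i, z i ≠ 0) ∧ MvPolynomial.eval z f = 0 ∧
    ∀ i, x i = Real.log ‖z i‖}

/-- The support of `f`, viewed as a subset of `ℝⁿ`. -/
def suppR {n : ℕ} (f : MvPolynomial (Fin n) ℂ) : Set (Fin n → ℝ) :=
  (fun α : Fin n →₀ ℕ => fun i => (α i : ℝ)) '' ↑f.support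

section PolygonClosing

variable {ι : Type*}

theorem exists_sign_abs_sum_mul_le [DecidableEq ι] (s : Finset ι) {r : ι → ℝ} {M : ℝ}
    (hM : 0 ≤ M) (hr : ∀ j ∈ s, 0 ≤ r j ∧ r j ≤ M) :
    ∃ ε : ι → ℝ, (∀ j, |ε j| = 1) ∧ |∑ j ∈ s, ε j * r j| ≤ M := by
  induction s using Finset.induction_on with
  | empty => exact ⟨1, by simp, by simpa using hM⟩
  | insert a s ha ih =>
    obtain ⟨ε, hε, hS⟩ := ih fun j hj => hr j (Finset.mem_insert_of_mem hj)
    obtain ⟨hra, hraM⟩ := hr a (Finset.mem_insert_self a s)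
    -- choose the sign of `r a` opposite to that of the partial sum
    set S := ∑ j ∈ s, ε j * r j
    refine ⟨Function.update ε a (if 0 ≤ S then -1 else 1), fun j => ?_, ?_⟩
    · rcases eq_or_ne j a with rfl | hj
      · split_ifs <;> simp
      · simp [hj, hε]
    · have hsum : ∑ j ∈ s, Function.update ε a (if 0 ≤ S then -1 else 1) j * r j = S :=
        Finset.sum_congr rfl fun j hj => by
          rw [Function.update_of_ne (ne_of_mem_of_not_mem hj ha)]
      rw [Finset.sum_insert ha, hsum, Function.update_self]
      rw [abs_le] at hS ⊢
      split_ifs <;> constructor <;> linarith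

theorem exists_norm_eq_one_sum_mul_eq_zero (s : Finset ι) {r : ι → ℝ} (hr : ∀ j ∈ s, 0 ≤ r j)
    (hbal : ∀ j ∈ s, 2 * r j ≤ ∑ k ∈ s, r k) :
    ∃ u : ι → ℂ, (∀ j ∈ s, ‖u j‖ = 1) ∧ ∑ j ∈ s, r j * u j = 0 := by
  classical
  rcases s.eq_empty_or_nonempty with rfl | hs
  · exact ⟨1, by simp, by simp⟩
  obtain ⟨m, hm, hmax⟩ := s.exists_max_image r hs
  rcases (hr m hm).eq_or_lt with hzero | hpos
  · refine ⟨1, by simp, Finset.sum_eq_zero fun j hj => ?_⟩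
    simp [le_antisymm (hzero ▸ hmax j hj) (hr j hj)]
  set T := s.erase m
  set F : (ι → ℂ) → ℝ := fun u => ‖∑ j ∈ T, r j * u j‖
  have htorus : IsPreconnected (Set.univ.pi fun _ : ι => Metric.sphere (0 : ℂ) 1) :=
    isPreconnected_univ_pi fun _ =>
      (isConnected_sphere (by simp [Complex.rank_real_complex]) 0 zero_le_one).isPreconnected
  -- The arms other than the longest one fold up to length `≤ r m` and stretch out to length
  -- `≥ r m`; as the torus is connected, some position has length exactly `r m`, and the longest
  -- arm closes the polygon.
  obtain ⟨ε, hε, hεT⟩ := exists_sign_abs_sum_mul_le T (M := r m) hpos.le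
    fun j hj => ⟨hr j (Finset.mem_of_mem_erase hj), hmax j (Finset.mem_of_mem_erase hj)⟩
  have hFε : F (fun j => (ε j : ℂ)) ≤ r m := by
    simpa [F, mul_comm, ← Complex.ofReal_mul, ← Complex.ofReal_sum] using hεT
  have hF1 : r m ≤ F 1 := by
    have h := hbal m hm
    rw [← Finset.add_sum_erase s r hm] at h
    have : F 1 = ∑ k ∈ T, r k := by
      simp only [F, Pi.one_apply, mul_one, ← Complex.ofReal_sum, Complex.norm_real,
        Real.norm_eq_abs]
      exact abs_of_nonneg (Finset.sum_nonneg fun j hj => hr j (Finset.mem_of_mem_erase hj))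
    linarith
  obtain ⟨u, hu, hFu⟩ := htorus.intermediate_value (a := fun j => (ε j : ℂ)) (b := 1)
    (fun j _ => by simp [hε]) (fun j _ => by simp) (by fun_prop) ⟨hFε, hF1⟩
  set w := ∑ j ∈ T, r j * u j
  refine ⟨Function.update u m (-w / r m), fun j hj => ?_, ?_⟩
  · rcases eq_or_ne j m with rfl | hjm
    · simp [abs_of_pos hpos, show ‖w‖ = r j from hFu, hpos.ne']
    · simpa [hjm] using hu j (Set.mem_univ j)
  · rw [← Finset.add_sum_erase s _ hm, Function.update_self,
      Finset.sum_congr rfl fun j hj => by rw [Function.update_of_ne (Finset.ne_of_mem_erase hj)]]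
    rw [mul_div_cancel₀ (-w) (Complex.ofReal_ne_zero.mpr hpos.ne')]
    exact neg_add_cancel w

theorem two_mul_norm_le_sum_norm_of_sum_eq_zero {E : Type*} [SeminormedAddCommGroup E]
    {s : Finset ι} {w : ι → E} (hw : ∑ j ∈ s, w j = 0) {i : ι} (hi : i ∈ s) :
    2 * ‖w i‖ ≤ ∑ j ∈ s, ‖w j‖ := by
  classical
  have hwi : w i = -∑ j ∈ s.erase i, w j :=
    eq_neg_of_add_eq_zero_left ((Finset.add_sum_erase s w hi).trans hw)
  have h : ‖w i‖ ≤ ∑ j ∈ s.erase i, ‖w j‖ := by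
    rw [hwi, norm_neg]
    exact norm_sum_le _ _
  rw [← Finset.add_sum_erase s _ hi]
  linarith

end PolygonClosing

section

variable {ι K V : Type*} [Field K] [AddCommGroup V] [Module K V]

theorem LinearIndependent.exists_linearMap_apply_eq {v : ι → V} (hv : LinearIndependent K v)
    (φ : ι → K) : ∃ ℓ : V →ₗ[K] K, ∀ i, ℓ (v i) = φ i := by
  obtain ⟨ℓ, hℓ⟩ := LinearMap.exists_extend (Finsupp.linearCombination K φ ∘ₗ hv.repr)
  refine ⟨ℓ, fun i => ?_⟩
  have hvi : v i ∈ Submodule.span K (Set.range v) := Submodule.subset_span ⟨i, rfl⟩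
  have := LinearMap.congr_fun hℓ ⟨v i, hvi⟩
  simpa [hv.repr_eq_single i ⟨v i, hvi⟩ rfl] using this

theorem AffineIndependent.exists_linearMap_apply_eq_add {p : ι → V}
    (hp : AffineIndependent K p) (φ : ι → K) :
    ∃ (ℓ : V →ₗ[K] K) (t : K), ∀ i, ℓ (p i) = φ i + t := by
  rcases isEmpty_or_nonempty ι with hι | ⟨⟨i₀⟩⟩
  · exact ⟨0, 0, isEmptyElim⟩
  obtain ⟨ℓ, hℓ⟩ := ((affineIndependent_iff_linearIndependent_vsub K p i₀).mp hp
    ).exists_linearMap_apply_eq fun i => φ i - φ i₀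
  refine ⟨ℓ, ℓ (p i₀) - φ i₀, fun i => ?_⟩
  rcases eq_or_ne i i₀ with rfl | hi
  · ring
  · have := hℓ ⟨i, hi⟩
    simp only [vsub_eq_sub, map_sub] at this
    linear_combination this

end

theorem AffineIndependent.exists_dotProduct_eq_add {ι : Type*} {n : ℕ} {p : ι → Fin n → ℝ}
    (hp : AffineIndependent ℝ p) (φ : ι → ℝ) :
    ∃ (θ : Fin n → ℝ) (t : ℝ), ∀ i, p i ⬝ᵥ θ = φ i + t := by
  obtain ⟨ℓ, t, hℓ⟩ := hp.exists_linearMap_apply_eq_add φ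
  refine ⟨fun j => ℓ fun k => if j = k then 1 else 0, t, fun i => ?_⟩
  rw [← hℓ, LinearMap.pi_apply_eq_sum_univ ℓ (p i)]
  simp [dotProduct]

theorem ConvexOn.sum {𝕜 E β ι : Type*} [Semiring 𝕜] [PartialOrder 𝕜] [AddCommMonoid E]
    [AddCommMonoid β] [PartialOrder β] [IsOrderedAddMonoid β] [SMul 𝕜 E] [Module 𝕜 β]
    {s : Set E} (hs : Convex 𝕜 s) (t : Finset ι) {f : ι → E → β}
    (hf : ∀ i ∈ t, ConvexOn 𝕜 s (f i)) : ConvexOn 𝕜 s (fun x => ∑ i ∈ t, f i x) := by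
  classical
  induction t using Finset.induction_on with
  | empty => simpa using convexOn_const 0 hs
  | insert a t ha ih =>
    simp only [Finset.sum_insert ha]
    exact (hf a (Finset.mem_insert_self a t)).add
      (ih fun i hi => hf i (Finset.mem_insert_of_mem hi))

theorem isClopen_of_iUnion_eq_univ {X ι : Type*} [TopologicalSpace X] {U : ι → Set X}
    (hopen : ∀ i, IsOpen (U i)) (hdisj : Pairwise (Function.onFun Disjoint U))
    (hunion : ⋃ i, U i = Set.univ) (i : ι) : IsClopen (U i) := by
  have hcompl : (U i)ᶜ = ⋃ (j) (_ : j ≠ i), U j := by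
    ext x
    obtain ⟨k, hk⟩ := Set.iUnion_eq_univ_iff.mp hunion x
    simp only [Set.mem_compl_iff, Set.mem_iUnion]
    refine ⟨fun hx => ⟨k, fun h => hx (h ▸ hk), hk⟩, fun ⟨j, hji, hj⟩ hi => ?_⟩
    exact Set.disjoint_left.mp (hdisj hji) hj hi
  exact ⟨isOpen_compl_iff.mp (hcompl ▸ isOpen_biUnion fun j _ => hopen j), hopen i⟩

theorem Nat.card_connectedComponents_of_iUnion_eq {X ι : Type*} [TopologicalSpace X]
    {S : Set X} {U : ι → Set X} (hS : ⋃ i, U i = S) (hopen : ∀ i, IsOpen (U i))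
    (hne : ∀ i, (U i).Nonempty) (hconn : ∀ i, IsPreconnected (U i))
    (hdisj : Pairwise (Function.onFun Disjoint U)) :
    Nat.card (ConnectedComponents S) = Nat.card ι := by
  have hsub : ∀ i, U i ⊆ S := fun i => hS ▸ Set.subset_iUnion U i
  have himage : ∀ i, Subtype.val '' (Subtype.val ⁻¹' U i : Set S) = U i := fun i => by
    rw [Subtype.image_preimage_coe, Set.inter_eq_self_of_subset_right (hsub i)]
  have hunion : ⋃ i, (Subtype.val ⁻¹' U i : Set S) = Set.univ := by
    rw [← Set.preimage_iUnion, hS, Subtype.coe_preimage_self]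
  have hopen' : ∀ i, IsOpen (Subtype.val ⁻¹' U i : Set S) := fun i =>
    (hopen i).preimage continuous_subtype_val
  refine Nat.card_congr (ConnectedComponents.equivOfIsClopenOfIsConnected
    (isClopen_of_iUnion_eq_univ hopen' (fun i j h => (hdisj h).preimage _) hunion)
    (fun i j h => (hdisj h).preimage _) hunion fun i => ?_)
  rw [IsConnected, ← Topology.IsInducing.subtypeVal.isPreconnected_image, ← Set.image_nonempty,
    himage]
  exact ⟨hne i, hconn i⟩

section Amoeba

variable {n : ℕ}

def realExponent (β : Fin n →₀ ℕ) : Fin n → ℝ := fun i => β i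

theorem realExponent_injective : Function.Injective (realExponent (n := n)) :=
  fun β γ h => Finsupp.ext fun i => by simpa [realExponent] using congr_fun h i

theorem affineIndependent_realExponent {f : MvPolynomial (Fin n) ℂ}
    (hf : AffineIndependent ℝ (Subtype.val : suppR f → (Fin n → ℝ))) :
    AffineIndependent ℝ fun β : f.support => realExponent (β : Fin n →₀ ℕ) := by
  let e : f.support ↪ suppR f :=
    ⟨fun β => ⟨realExponent β, β, by exact_mod_cast β.2, rfl⟩,
      fun β γ h => Subtype.ext (realExponent_injective (congr_arg Subtype.val h))⟩
  exact hf.comp_embedding e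

theorem eval_exp_eq_sum (f : MvPolynomial (Fin n) ℂ) (x θ : Fin n → ℝ) :
    eval (fun i => Complex.exp (x i + θ i * Complex.I)) f =
      ∑ β ∈ f.support, coeff β f *
        Complex.exp (↑(realExponent β ⬝ᵥ x) + ↑(realExponent β ⬝ᵥ θ) * Complex.I) := by
  rw [eval_eq']
  refine Finset.sum_congr rfl fun β _ => congr_arg _ ?_
  simp_rw [← Complex.exp_nat_mul, ← Complex.exp_sum]
  congr 1
  simp only [realExponent, dotProduct, Complex.ofReal_sum, Complex.ofReal_mul,
    Complex.ofReal_natCast, Finset.sum_mul, ← Finset.sum_add_distrib]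
  exact Finset.sum_congr rfl fun i _ => by ring

theorem mem_amoeba_iff {f : MvPolynomial (Fin n) ℂ} {x : Fin n → ℝ} :
    x ∈ amoeba f ↔ ∃ θ : Fin n → ℝ, eval (fun i => Complex.exp (x i + θ i * Complex.I)) f = 0 := by
  constructor
  · rintro ⟨z, hz0, hz, hx⟩
    refine ⟨fun i => Complex.arg (z i), ?_⟩
    have hzexp : (fun i => Complex.exp (x i + Complex.arg (z i) * Complex.I)) = z :=
      funext fun i => by rw [hx i]; exact Complex.exp_log (hz0 i)
    rwa [hzexp]
  · rintro ⟨θ, hθ⟩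
    refine ⟨_, fun i => Complex.exp_ne_zero _, hθ, fun i => ?_⟩
    simp [Complex.norm_exp]

noncomputable def termNorm (f : MvPolynomial (Fin n) ℂ) (x : Fin n → ℝ) (β : Fin n →₀ ℕ) : ℝ :=
  ‖coeff β f‖ * Real.exp (realExponent β ⬝ᵥ x)

theorem norm_coeff_mul_exp_eq_termNorm (f : MvPolynomial (Fin n) ℂ) (x : Fin n → ℝ) (β : Fin n →₀ ℕ)
    (φ : ℝ) : ‖coeff β f * Complex.exp (↑(realExponent β ⬝ᵥ x) + φ * Complex.I)‖ =
      termNorm f x β := by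
  simp [termNorm, Complex.norm_exp]

theorem two_mul_termNorm_le_of_mem_amoeba {f : MvPolynomial (Fin n) ℂ} {x : Fin n → ℝ}
    (hx : x ∈ amoeba f) {α : Fin n →₀ ℕ} (hα : α ∈ f.support) :
    2 * termNorm f x α ≤ ∑ β ∈ f.support, termNorm f x β := by
  obtain ⟨θ, hθ⟩ := mem_amoeba_iff.mp hx
  rw [eval_exp_eq_sum] at hθ
  simpa only [norm_coeff_mul_exp_eq_termNorm] using two_mul_norm_le_sum_norm_of_sum_eq_zero hθ hα

theorem mul_exp_arg_sub_arg (c u : ℂ) (hc : c ≠ 0) (hu : ‖u‖ = 1) (a t : ℝ) :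
    c * Complex.exp (a + ↑(Complex.arg u - Complex.arg c + t) * Complex.I) =
      Complex.exp (t * Complex.I) * (↑(‖c‖ * Real.exp a) * u) := by
  have hu' : Complex.exp (Complex.arg u * Complex.I) = u := by
    simpa [hu] using Complex.norm_mul_exp_arg_mul_I u
  have hc' : Complex.exp (Complex.arg c * Complex.I) = c / ‖c‖ := by
    rw [eq_div_iff (by simpa using hc), mul_comm]
    exact Complex.norm_mul_exp_arg_mul_I c
  rw [show (a : ℂ) + ↑(Complex.arg u - Complex.arg c + t) * Complex.I =
      a + Complex.arg u * Complex.I + t * Complex.I - Complex.arg c * Complex.I by push_cast; ring,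
    Complex.exp_sub, Complex.exp_add, Complex.exp_add, hu', hc']
  have : (‖c‖ : ℂ) ≠ 0 := by simpa using hc
  push_cast
  field_simp

theorem mem_amoeba_of_forall_two_mul_termNorm_le {f : MvPolynomial (Fin n) ℂ}
    (hf : AffineIndependent ℝ fun β : f.support => realExponent (β : Fin n →₀ ℕ))
    {x : Fin n → ℝ} (hx : ∀ α ∈ f.support, 2 * termNorm f x α ≤ ∑ β ∈ f.support, termNorm f x β) :
    x ∈ amoeba f := by
  obtain ⟨u, hu, hsum⟩ := exists_norm_eq_one_sum_mul_eq_zero f.support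
    (fun β _ => by unfold termNorm; positivity) hx
  obtain ⟨θ, t, hθ⟩ := hf.exists_dotProduct_eq_add fun β =>
    Complex.arg (u β) - Complex.arg (coeff β f)
  refine mem_amoeba_iff.mpr ⟨θ, ?_⟩
  rw [eval_exp_eq_sum, Finset.sum_congr rfl fun β hβ => by
    rw [hθ ⟨β, hβ⟩, mul_exp_arg_sub_arg _ _ (mem_support_iff.mp hβ) (hu β hβ)],
    ← Finset.mul_sum]
  exact mul_eq_zero_of_right _ hsum

def lopsidedRegion (f : MvPolynomial (Fin n) ℂ) (α : Fin n →₀ ℕ) : Set (Fin n → ℝ) :=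
  {x | ∑ β ∈ f.support, termNorm f x β < 2 * termNorm f x α}

theorem compl_amoeba_eq_iUnion_lopsidedRegion {f : MvPolynomial (Fin n) ℂ}
    (hf : AffineIndependent ℝ fun β : f.support => realExponent (β : Fin n →₀ ℕ)) :
    (amoeba f)ᶜ = ⋃ α : f.support, lopsidedRegion f α := by
  ext x
  simp only [Set.mem_compl_iff, Set.mem_iUnion, lopsidedRegion, Set.mem_ofPred_eq,
    Subtype.exists, exists_prop]
  constructor
  · intro hx
    by_contra! h
    exact hx (mem_amoeba_of_forall_two_mul_termNorm_le hf h)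
  · rintro ⟨α, hα, hlt⟩ hx
    exact (two_mul_termNorm_le_of_mem_amoeba hx hα).not_gt hlt

theorem continuous_termNorm (f : MvPolynomial (Fin n) ℂ) (β : Fin n →₀ ℕ) :
    Continuous fun x => termNorm f x β := by
  unfold termNorm
  fun_prop

theorem isOpen_lopsidedRegion (f : MvPolynomial (Fin n) ℂ) (α : Fin n →₀ ℕ) :
    IsOpen (lopsidedRegion f α) :=
  isOpen_lt (continuous_finsetSum _ fun β _ => continuous_termNorm f β)
    (continuous_const.mul (continuous_termNorm f α))

theorem convexOn_exp_dotProduct (v : Fin n → ℝ) :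
    ConvexOn ℝ Set.univ fun x : Fin n → ℝ => Real.exp (v ⬝ᵥ x) :=
  convexOn_exp.comp_linearMap (dotProductBilin ℝ ℝ v)

theorem convex_lopsidedRegion (f : MvPolynomial (Fin n) ℂ) (α : Fin n →₀ ℕ) :
    Convex ℝ (lopsidedRegion f α) := by
  have hterm : ∀ x β, termNorm f x β =
      ‖coeff β f‖ * Real.exp ((realExponent β - realExponent α) ⬝ᵥ x) *
        Real.exp (realExponent α ⬝ᵥ x) := fun x β => by
    rw [termNorm, mul_assoc, ← Real.exp_add, sub_dotProduct, sub_add_cancel]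
  have hregion : lopsidedRegion f α = {x | x ∈ Set.univ ∧
      ∑ β ∈ f.support, ‖coeff β f‖ * Real.exp ((realExponent β - realExponent α) ⬝ᵥ x) <
        2 * ‖coeff α f‖} := by
    ext x
    simp only [lopsidedRegion, Set.mem_ofPred_eq, Set.mem_univ, true_and, hterm,
      ← Finset.sum_mul, sub_self, zero_dotProduct, Real.exp_zero, mul_one]
    rw [← mul_assoc, mul_lt_mul_iff_left₀ (Real.exp_pos _)]
  rw [hregion]
  exact (ConvexOn.sum convex_univ _ fun β _ =>
    (convexOn_exp_dotProduct _).smul (norm_nonneg (coeff β f))).convex_lt _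

theorem disjoint_lopsidedRegion (f : MvPolynomial (Fin n) ℂ) {α β : Fin n →₀ ℕ}
    (hα : α ∈ f.support) (hβ : β ∈ f.support) (hαβ : α ≠ β) :
    Disjoint (lopsidedRegion f α) (lopsidedRegion f β) := by
  refine Set.disjoint_left.mpr fun x hxα hxβ => ?_
  have hpair : termNorm f x α + termNorm f x β ≤ ∑ γ ∈ f.support, termNorm f x γ := by
    rw [← Finset.sum_pair hαβ]
    refine Finset.sum_le_sum_of_subset_of_nonneg ?_ fun γ _ _ => ?_
    · exact Finset.insert_subset hα (Finset.singleton_subset_iff.mpr hβ)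
    · unfold termNorm; positivity
  simp only [lopsidedRegion, Set.mem_ofPred_eq] at hxα hxβ
  linarith

theorem lopsidedRegion_nonempty {f : MvPolynomial (Fin n) ℂ}
    (hf : AffineIndependent ℝ fun β : f.support => realExponent (β : Fin n →₀ ℕ))
    {α : Fin n →₀ ℕ} (hα : α ∈ f.support) : (lopsidedRegion f α).Nonempty := by
  classical
  -- `θ` is a linear form that is larger by exactly `1` at `α` than at the other exponents
  obtain ⟨θ, t, hθ⟩ := hf.exists_dotProduct_eq_add fun β => if (β : Fin n →₀ ℕ) = α then 1 else 0
  set a := ‖coeff α f‖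
  set K := ∑ β ∈ f.support, ‖coeff β f‖
  have ha : 0 < a := norm_pos_iff.mpr (mem_support_iff.mp hα)
  set s := K / a
  have hKs : K < a * Real.exp s := by
    have := Real.add_one_le_exp s
    rw [← div_lt_iff₀' ha]
    linarith
  refine ⟨s • θ, ?_⟩
  have hterm : ∀ β ∈ f.support, termNorm f (s • θ) β =
      ‖coeff β f‖ * Real.exp (s * if β = α then 1 else 0) * Real.exp (s * t) := fun β hβ => by
    rw [termNorm, dotProduct_smul, hθ ⟨β, hβ⟩, smul_eq_mul, mul_add, Real.exp_add, mul_assoc]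
  have hrest :
      ∑ β ∈ f.support.erase α, ‖coeff β f‖ * Real.exp (s * if β = α then 1 else 0) ≤ K := by
    rw [Finset.sum_congr rfl fun β hβ => by rw [if_neg (Finset.ne_of_mem_erase hβ)]]
    simpa using Finset.sum_le_sum_of_subset_of_nonneg (Finset.erase_subset α f.support)
      fun β _ _ => norm_nonneg (coeff β f)
  simp only [lopsidedRegion, Set.mem_ofPred_eq, Finset.sum_congr rfl hterm, hterm α hα,
    ← Finset.sum_mul]
  rw [← mul_assoc, mul_lt_mul_iff_left₀ (Real.exp_pos _), ← Finset.add_sum_erase _ _ hα]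
  simp only [↓reduceIte, mul_one]
  linarith

end Amoeba

theorem simplex_support_solid_amoeba_general (n : ℕ)
    (f : MvPolynomial (Fin n) ℂ)
    (hsimplex : AffineIndependent ℝ (Subtype.val : suppR f → (Fin n → ℝ))) :
    Nat.card (ConnectedComponents ↥((amoeba f)ᶜ)) = f.support.card := by
  have hf := affineIndependent_realExponent hsimplex
  rw [← Nat.card_eq_finsetCard]
  exact Nat.card_connectedComponents_of_iUnion_eq (compl_amoeba_eq_iUnion_lopsidedRegion hf).symm
    (fun α => isOpen_lopsidedRegion f α) (fun α => lopsidedRegion_nonempty hf α.2)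
    (fun α => (convex_lopsidedRegion f α).isPreconnected)
    (fun α β h => disjoint_lopsidedRegion f α.2 β.2 (Subtype.coe_ne_coe.mpr h))

/-- If the support of `f`, viewed in `ℝⁿ`, is affinely independent (so the Newton polytope is a
simplex whose vertex set is the support), then the amoeba of `f` is solid: the number of
connected components of `ℝⁿ ∖ 𝒜_f` equals the cardinality of the support of `f`. -/
theorem simplex_support_solid_amoeba (n : ℕ) (hn : 1 ≤ n)
    (f : MvPolynomial (Fin n) ℂ) (hf : f ≠ 0)
    (hsimplex : AffineIndependent ℝ (Subtype.val : suppR f → (Fin n → ℝ))) :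
    Nat.card (ConnectedComponents ↥((amoeba f)ᶜ)) = f.support.card :=
  simplex_support_solid_amoeba_general n f hsimplex
end

section
/- (Kapranov) Let n ≥ 1 and let g = Σ_{α∈A} a_α X^α be a nonzero polynomial over K with finite support A ⊆ ℕⁿ and all a_α nonzero. Then the set {(val(z₁),…,val(zₙ)) : z ∈ (K∖{0})ⁿ, g(z) = 0} equals the corner locus of the tropical polynomial x ↦ max_{α∈A}(val(a_α) + ⟨α,x⟩), i.e. the set of x ∈ ℝⁿ for which there exist two distinct α, β ∈ A with val(a_α) + ⟨α,x⟩ = val(a_β) + ⟨β,x⟩ = max_{γ∈A}(val(a_γ) + ⟨γ,x⟩), where ⟨·,·⟩ is the Euclidean scalar product on ℝⁿ. -/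
/-- The field of generalized power series over `ℂ` with well-ordered real exponent sets. -/
abbrev K : Type := HahnSeries ℝ ℂ

/-- The valuation `val a = -min (supp a)` (for `a ≠ 0`). -/
noncomputable def Kval (a : K) : ℝ := -(HahnSeries.order a)

/-!
`⊆`: at a zero `z` of `g` the monomial `a_γ z^γ` has order `-(val a_γ + ⟨γ, val z⟩)`, and a sum
whose minimal order is attained by only one term cannot vanish.

`⊇`: choose a coordinate `i₀` with `α i₀ ≠ β i₀` and put `z_i = c_i t^(-x_i)` with `c ∈ (ℂˣ)ⁿ`
generic. Scaling `z_{i₀}` by an unknown `T` turns `g` into a polynomial in `T` whose initial form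
at height `-max_γ (val a_γ + ⟨γ, x⟩)` has nonzero coefficients in the distinct degrees `α i₀` and
`β i₀`, so it has a root of order `0` by the one-variable case.

One variable, over `F⟦ℝ⟧` with `F` algebraically closed: a nonzero root `c₀` of the initial form
along slope `τ` gives a starting point `c₀ t^τ`. By Zorn's lemma, with chains bounded thanks to
spherical completeness, some iterated Newton refinement of it cannot be refined further, and it is
a root, since any non-root is refined by adding `c t^s` with `c` a root of the initial form of its
Taylor expansion along the last Newton slope `s`.
-/

open HahnSeries Polynomial

theorem AddValuation.exists_ne_map_eq_of_sum_eq_zero {R Γ₀ ι : Type*} [Ring R]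
    [LinearOrderedAddCommMonoidWithTop Γ₀] (v : AddValuation R Γ₀) {s : Finset ι} {f : ι → R}
    (hf : ∑ j ∈ s, f j = 0) {i : ι} (hi : i ∈ s) (hfi : v (f i) ≠ ⊤)
    (hmin : ∀ j ∈ s, v (f i) ≤ v (f j)) : ∃ j ∈ s, j ≠ i ∧ v (f j) = v (f i) := by
  classical
  by_contra! h
  have hrest : v (f i) < v (∑ j ∈ s.erase i, f j) :=
    v.map_lt_sum hfi fun j hj =>
      (hmin j (Finset.mem_of_mem_erase hj)).lt_of_ne (h j (Finset.mem_of_mem_erase hj)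
        (Finset.ne_of_mem_erase hj)).symm
  rw [← Finset.add_sum_erase s f hi] at hf
  exact hfi (by simpa [v.map_add_eq_of_lt_left hrest] using congrArg v hf)

theorem MvPolynomial.exists_forall_ne_zero_eval_ne_zero {R σ : Type*} [CommRing R] [IsDomain R]
    [Infinite R] [Fintype σ] {f : MvPolynomial σ R} (hf : f ≠ 0) :
    ∃ c : σ → R, (∀ i, c i ≠ 0) ∧ eval c f ≠ 0 := by
  have hg : f * ∏ i, X i ≠ 0 :=
    mul_ne_zero hf (Finset.prod_ne_zero_iff.2 fun i _ => X_ne_zero i)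
  obtain ⟨c, hc⟩ : ∃ c, eval c (f * ∏ i, X i) ≠ 0 := by
    by_contra! h
    exact hg (MvPolynomial.funext fun c => by rw [h c, map_zero])
  rw [map_mul, map_prod] at hc
  simp only [eval_X] at hc
  exact ⟨c, fun i hi => hc (by rw [Finset.prod_eq_zero (Finset.mem_univ i) hi, mul_zero]),
    left_ne_zero_of_mul hc⟩

theorem Relation.ReflGen.of_ne {α : Type*} {r : α → α → Prop} {a b : α}
    (h : Relation.ReflGen r a b) (hne : a ≠ b) : r a b := by
  rcases h with _ | h
  exacts [absurd rfl hne, h]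

theorem Polynomial.exists_ne_zero_isRoot_of_coeff_ne_zero {F : Type*} [Field F] [IsAlgClosed F]
    {q : F[X]} {k l : ℕ} (hkl : k ≠ l) (hk : q.coeff k ≠ 0) (hl : q.coeff l ≠ 0) :
    ∃ c, c ≠ 0 ∧ q.IsRoot c := by
  have hq : q ≠ 0 := by rintro rfl; exact hk (coeff_zero k)
  obtain ⟨Q, hqQ, hQ⟩ := exists_eq_pow_rootMultiplicity_mul_and_not_dvd q hq 0
  have hQdeg : Q.degree ≠ 0 := by
    intro h
    rw [eq_C_of_degree_eq_zero h, C_0, sub_zero, mul_comm] at hqQ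
    rw [hqQ, coeff_C_mul_X_pow] at hk hl
    split_ifs at hk hl with h₁ h₂ <;>
      first | exact hk rfl | exact hl rfl | exact hkl (h₁.trans h₂.symm)
  obtain ⟨c, hc⟩ := IsAlgClosed.exists_root Q hQdeg
  refine ⟨c, ?_, by rw [hqQ, IsRoot, eval_mul, hc.eq_zero, mul_zero]⟩
  rintro rfl
  exact hQ (dvd_iff_isRoot.2 hc)

namespace HahnSeries

theorem coe_order_le_orderTop {Γ R : Type*} [LinearOrder Γ] [Zero Γ] [Zero R]
    (x : R⟦Γ⟧) : (x.order : WithTop Γ) ≤ x.orderTop := by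
  rcases eq_or_ne x 0 with rfl | hx
  · simp
  · exact (order_eq_orderTop_of_ne_zero hx).le

theorem le_of_mem_support_of_le_orderTop {Γ R : Type*} [LinearOrder Γ] [Zero R] {x : R⟦Γ⟧} {g i : Γ}
    (hx : (g : WithTop Γ) ≤ x.orderTop) (hi : i ∈ x.support) : g ≤ i := by
  by_contra! hlt
  exact hi (coeff_eq_zero_of_lt_orderTop ((WithTop.coe_lt_coe.2 hlt).trans_le hx))

section OrderedMonoid

variable {Γ R : Type*} [AddCommMonoid Γ] [LinearOrder Γ] [IsOrderedCancelAddMonoid Γ]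

theorem coeff_mul_of_le_orderTop [NonUnitalNonAssocSemiring R] {x y : R⟦Γ⟧} {g h : Γ}
    (hx : (g : WithTop Γ) ≤ x.orderTop) (hy : (h : WithTop Γ) ≤ y.orderTop) :
    (x * y).coeff (g + h) = x.coeff g * y.coeff h := by
  rw [coeff_mul, Finset.sum_eq_single (g, h)]
  · rintro ⟨i, j⟩ hij hne
    obtain ⟨hi, hj, hsum⟩ := Finset.mem_antidiagonal.1 hij
    have hgi := le_of_mem_support_of_le_orderTop hx hi
    have hhj := le_of_mem_support_of_le_orderTop hy hj
    have hig : i ≤ g := le_of_add_le_add_right (hsum.trans_le (add_le_add_right hhj g))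
    have hjh : j ≤ h := le_of_add_le_add_left (hsum.trans_le (add_le_add_left hgi h))
    exact absurd (Prod.ext (hig.antisymm hgi) (hjh.antisymm hhj)) hne
  · intro hgh
    by_cases hg : x.coeff g = 0
    · rw [hg, zero_mul]
    · have hh : y.coeff h = 0 := by
        by_contra hh
        exact hgh (Finset.mem_antidiagonal.2 ⟨hg, hh, rfl⟩)
      rw [hh, mul_zero]

theorem le_orderTop_mul [NonUnitalNonAssocSemiring R] {x y : R⟦Γ⟧} {g h : Γ}
    (hx : (g : WithTop Γ) ≤ x.orderTop) (hy : (h : WithTop Γ) ≤ y.orderTop) :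
    ((g + h : Γ) : WithTop Γ) ≤ (x * y).orderTop :=
  (WithTop.coe_add g h ▸ add_le_add hx hy).trans orderTop_add_le_mul

theorem le_orderTop_pow [Semiring R] {x : R⟦Γ⟧} {g : Γ} (hx : (g : WithTop Γ) ≤ x.orderTop)
    (k : ℕ) : ((k • g : Γ) : WithTop Γ) ≤ (x ^ k).orderTop :=
  (WithTop.coe_nsmul g k ▸ nsmul_le_nsmul_right hx k).trans orderTop_nsmul_le_orderTop_pow

theorem coeff_pow_of_le_orderTop [Semiring R] {x : R⟦Γ⟧} {g : Γ}
    (hx : (g : WithTop Γ) ≤ x.orderTop) (k : ℕ) : (x ^ k).coeff (k • g) = x.coeff g ^ k := by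
  induction k with
  | zero => simp [coeff_one]
  | succ k ih =>
    rw [pow_succ, succ_nsmul, coeff_mul_of_le_orderTop (le_orderTop_pow hx k) hx, ih, pow_succ]

theorem le_orderTop_prod [CommSemiring R] {ι : Type*} {s : Finset ι} {x : ι → R⟦Γ⟧} {g : ι → Γ}
    (hx : ∀ i ∈ s, (g i : WithTop Γ) ≤ (x i).orderTop) :
    ((∑ i ∈ s, g i : Γ) : WithTop Γ) ≤ (∏ i ∈ s, x i).orderTop := by
  classical
  induction s using Finset.induction_on with
  | empty =>
    simpa [le_orderTop_iff_forall, coeff_one] using fun j hj h => absurd h hj.ne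
  | insert j s hj ih =>
    rw [Finset.prod_insert hj, Finset.sum_insert hj]
    exact le_orderTop_mul (hx j (s.mem_insert_self j))
      (ih fun i hi => hx i (Finset.mem_insert_of_mem hi))

theorem coeff_prod_of_le_orderTop [CommSemiring R] {ι : Type*} {s : Finset ι} {x : ι → R⟦Γ⟧}
    {g : ι → Γ} (hx : ∀ i ∈ s, (g i : WithTop Γ) ≤ (x i).orderTop) :
    (∏ i ∈ s, x i).coeff (∑ i ∈ s, g i) = ∏ i ∈ s, (x i).coeff (g i) := by
  classical
  induction s using Finset.induction_on with
  | empty => simp [coeff_one]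
  | insert j s hj ih =>
    have hs : ∀ i ∈ s, (g i : WithTop Γ) ≤ (x i).orderTop :=
      fun i hi => hx i (Finset.mem_insert_of_mem hi)
    rw [Finset.prod_insert hj, Finset.sum_insert hj, Finset.prod_insert hj,
      coeff_mul_of_le_orderTop (hx j (s.mem_insert_self j)) (le_orderTop_prod hs), ih hs]

end OrderedMonoid

/-- Hahn series are spherically complete: pairwise intersecting balls have a common point. -/
theorem exists_forall_le_orderTop_sub {Γ R ι : Type*} [LinearOrder Γ] [AddGroup R]
    (z : ι → R⟦Γ⟧) (t : ι → Γ)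
    (h : ∀ i j, ((min (t i) (t j) : Γ) : WithTop Γ) ≤ (z i - z j).orderTop) :
    ∃ y : R⟦Γ⟧, ∀ i, (t i : WithTop Γ) ≤ (y - z i).orderTop := by
  classical
  have hagree : ∀ i j e, e < t i → e < t j → (z i).coeff e = (z j).coeff e := fun i j e hi hj =>
    sub_eq_zero.1 (by
      rw [← coeff_sub]
      exact coeff_eq_zero_of_lt_orderTop ((WithTop.coe_lt_coe.2 (lt_min hi hj)).trans_le (h i j)))
  let f : Γ → R := fun e => if he : ∃ i, e < t i then (z he.choose).coeff e else 0
  have hf : ∀ i e, e < t i → f e = (z i).coeff e := fun i e he => by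
    have hex : ∃ i, e < t i := ⟨i, he⟩
    simp only [f, dif_pos hex]
    exact hagree _ _ e hex.choose_spec he
  have hwf : (Function.support f).IsWF := by
    rw [Set.isWF_iff_no_descending_seq]
    intro s hs hmem
    obtain ⟨i, hi⟩ : ∃ i, s 0 < t i := by
      by_contra! hnone
      exact hmem 0 (by simp [f, not_exists.2 fun i => (hnone i).not_gt])
    refine Set.isWF_iff_no_descending_seq.1 (z i).isWF_support s hs fun k => ?_
    have hk : s k < t i := (hs.antitone (Nat.zero_le k)).trans_lt hi
    simpa [← hf i _ hk] using hmem k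
  refine ⟨⟨f, hwf.isPWO⟩, fun i => le_orderTop_iff_forall.2 fun e he => ?_⟩
  rw [coeff_sub, sub_eq_zero]
  exact hf i e (WithTop.coe_lt_coe.1 he)

end HahnSeries

namespace Kapranov

variable {F : Type*} [Field F]

theorem le_orderTop_mul_pow {a y : F⟦ℝ⟧} {u s : ℝ} (ha : (u : WithTop ℝ) ≤ a.orderTop)
    (hy : (s : WithTop ℝ) ≤ y.orderTop) (j : ℕ) :
    ((u + j * s : ℝ) : WithTop ℝ) ≤ (a * y ^ j).orderTop := by
  simpa [nsmul_eq_mul] using le_orderTop_mul ha (le_orderTop_pow hy j)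

section InitialForm

/-- The coefficient of `t ^ V` in `p (c t ^ τ)`, as a polynomial in `c`. -/
noncomputable def initialForm (p : F⟦ℝ⟧[X]) (τ V : ℝ) : F[X] :=
  ∑ j ∈ p.support, monomial j ((p.coeff j).coeff (V - j * τ))

theorem coeff_initialForm (p : F⟦ℝ⟧[X]) (τ V : ℝ) (j : ℕ) :
    (initialForm p τ V).coeff j = (p.coeff j).coeff (V - j * τ) := by
  classical
  simp only [initialForm, finsetSum_coeff, coeff_monomial, Finset.sum_ite_eq', mem_support_iff,
    ite_not]
  split_ifs with h <;> simp [h]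

variable {p : F⟦ℝ⟧[X]} {τ V : ℝ} {y : F⟦ℝ⟧}

theorem coeff_ne_zero_of_coeff_initialForm_ne_zero {j : ℕ}
    (h : (initialForm p τ V).coeff j ≠ 0) : p.coeff j ≠ 0 :=
  fun hj => h (by rw [coeff_initialForm, hj, HahnSeries.coeff_zero])

theorem le_orderTop_eval (hy : (τ : WithTop ℝ) ≤ y.orderTop)
    (hp : ∀ j : ℕ, ((V - j * τ : ℝ) : WithTop ℝ) ≤ (p.coeff j).orderTop) :
    (V : WithTop ℝ) ≤ (p.eval y).orderTop := by
  rw [eval_eq_sum, sum_def, ← addVal_apply]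
  exact (addVal ℝ F).map_le_sum fun j _ => by
    simpa only [sub_add_cancel, addVal_apply] using le_orderTop_mul_pow (hp j) hy j

theorem coeff_eval_eq_eval_initialForm (hy : (τ : WithTop ℝ) ≤ y.orderTop)
    (hp : ∀ j : ℕ, ((V - j * τ : ℝ) : WithTop ℝ) ≤ (p.coeff j).orderTop) :
    (p.eval y).coeff V = (initialForm p τ V).eval (y.coeff τ) := by
  rw [eval_eq_sum, sum_def, HahnSeries.coeff_sum, initialForm, eval_finsetSum]
  refine Finset.sum_congr rfl fun j _ => ?_
  have hV : V = (V - j * τ) + j • τ := by rw [nsmul_eq_mul]; ring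
  rw [eval_monomial, hV, coeff_mul_of_le_orderTop (hp j) (le_orderTop_pow hy j),
    coeff_pow_of_le_orderTop hy, ← hV]

theorem exists_lt_orderTop_eval_single [IsAlgClosed F]
    (hp : ∀ j : ℕ, ((V - j * τ : ℝ) : WithTop ℝ) ≤ (p.coeff j).orderTop) {k l : ℕ} (hkl : k ≠ l)
    (hk : (initialForm p τ V).coeff k ≠ 0) (hl : (initialForm p τ V).coeff l ≠ 0) :
    ∃ c, c ≠ 0 ∧ (V : WithTop ℝ) < (p.eval (single τ c)).orderTop := by
  obtain ⟨c, hc, hroot⟩ := exists_ne_zero_isRoot_of_coeff_ne_zero hkl hk hl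
  have hy : (τ : WithTop ℝ) ≤ (single τ c).orderTop := orderTop_single_le
  refine ⟨c, hc, (le_orderTop_eval hy hp).lt_of_ne (orderTop_ne_of_coeff_eq_zero ?_).symm⟩
  rw [coeff_eval_eq_eval_initialForm hy hp, coeff_single_same, hroot.eq_zero]

theorem exists_orderTop_eval_single_eq [Infinite F]
    (hp : ∀ j : ℕ, ((V - j * τ : ℝ) : WithTop ℝ) ≤ (p.coeff j).orderTop)
    (hinit : initialForm p τ V ≠ 0) : ∃ c, (p.eval (single τ c)).orderTop = V := by
  classical
  obtain ⟨c, hc⟩ := Infinite.exists_notMem_finset (initialForm p τ V).roots.toFinset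
  rw [Multiset.mem_toFinset, mem_roots hinit] at hc
  have hy : (τ : WithTop ℝ) ≤ (single τ c).orderTop := orderTop_single_le
  refine ⟨c, le_antisymm (orderTop_le_of_coeff_ne_zero ?_) (le_orderTop_eval hy hp)⟩
  rwa [coeff_eval_eq_eval_initialForm hy hp, coeff_single_same]

end InitialForm

noncomputable def posTaylorSupport {R : Type*} [Semiring R] (p : R[X]) (z : R) : Finset ℕ :=
  (taylor z p).support.erase 0

theorem eval_add_eq_add_sum_taylor {R : Type*} [CommSemiring R] (p : R[X]) (z h : R) :
    p.eval (z + h) = p.eval z + ∑ j ∈ posTaylorSupport p z, (taylor z p).coeff j * h ^ j := by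
  rw [add_comm, ← taylor_eval, eval_eq_sum, sum_def, posTaylorSupport]
  by_cases h0 : 0 ∈ (taylor z p).support
  · rw [← Finset.add_sum_erase _ _ h0, taylor_coeff_zero, pow_zero, mul_one]
  · rw [Finset.erase_eq_of_notMem h0, ← taylor_coeff_zero, notMem_support_iff.1 h0, zero_add]

section NewtonSlope

variable {p : F⟦ℝ⟧[X]}

/-- The largest order of `r - z` over the roots `r` of `p`, read off as the last slope of the
Newton polygon of `taylor z p` (meaningful when `p.eval z ≠ 0`). -/
noncomputable def newtonSlope (p : F⟦ℝ⟧[X]) (z : F⟦ℝ⟧) : ℝ :=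
  if h : (posTaylorSupport p z).Nonempty then
    (posTaylorSupport p z).sup' h fun j => ((p.eval z).order - ((taylor z p).coeff j).order) / j
  else 0

theorem natDegree_mem_posTaylorSupport (hp : 0 < p.natDegree) (z : F⟦ℝ⟧) :
    p.natDegree ∈ posTaylorSupport p z := by
  have hp0 : p ≠ 0 := by rintro rfl; simp at hp
  refine Finset.mem_erase.2 ⟨hp.ne', ?_⟩
  rw [mem_support_iff, ← natDegree_taylor p z, coeff_natDegree, Polynomial.leadingCoeff_ne_zero]
  exact fun h => hp0 (by simpa using congrArg (taylor (-z)) h)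

theorem order_eval_le_add_newtonSlope {z : F⟦ℝ⟧} {j : ℕ} (hj : j ∈ posTaylorSupport p z) :
    (p.eval z).order ≤ ((taylor z p).coeff j).order + j * newtonSlope p z := by
  have hj0 : (0 : ℝ) < j := Nat.cast_pos.2 (Nat.pos_of_ne_zero (Finset.ne_of_mem_erase hj))
  have hle := Finset.le_sup' (fun j : ℕ => ((p.eval z).order - ((taylor z p).coeff j).order) / j) hj
  rw [newtonSlope, dif_pos ⟨j, hj⟩]
  rw [div_le_iff₀ hj0] at hle
  linarith

theorem exists_order_eval_eq_add_newtonSlope (hp : 0 < p.natDegree) (z : F⟦ℝ⟧) :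
    ∃ j ∈ posTaylorSupport p z,
      (p.eval z).order = ((taylor z p).coeff j).order + j * newtonSlope p z := by
  have hne : (posTaylorSupport p z).Nonempty := ⟨_, natDegree_mem_posTaylorSupport hp z⟩
  obtain ⟨j, hj, hmax⟩ := Finset.exists_mem_eq_sup' hne
    fun j : ℕ => ((p.eval z).order - ((taylor z p).coeff j).order) / j
  have hj0 : (j : ℝ) ≠ 0 := Nat.cast_ne_zero.2 (Finset.ne_of_mem_erase hj)
  refine ⟨j, hj, ?_⟩
  rw [newtonSlope, dif_pos hne, hmax]
  field_simp
  ring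

theorem le_orderTop_eval_of_le_orderTop_sub {x y : F⟦ℝ⟧} (hx : p.eval x ≠ 0)
    (hy : (newtonSlope p x : WithTop ℝ) ≤ (y - x).orderTop) :
    ((p.eval x).order : WithTop ℝ) ≤ (p.eval y).orderTop := by
  rw [← add_sub_cancel x y, eval_add_eq_add_sum_taylor, ← addVal_apply]
  refine (addVal ℝ F).map_le_add (by rw [addVal_apply, order_eq_orderTop_of_ne_zero hx]) <|
    (addVal ℝ F).map_le_sum fun j hj => ?_
  have hqj : (taylor x p).coeff j ≠ 0 := mem_support_iff.1 (Finset.mem_of_mem_erase hj)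
  refine le_trans ?_ (le_orderTop_mul_pow (order_eq_orderTop_of_ne_zero hqj).le hy j)
  exact WithTop.coe_le_coe.2 (order_eval_le_add_newtonSlope hj)

theorem lt_newtonSlope {z z' : F⟦ℝ⟧} {s : ℝ} (hz' : p.eval z' ≠ 0)
    (hs : (s : WithTop ℝ) ≤ (z - z').orderTop)
    (hlt : (p.eval z).orderTop < (p.eval z').orderTop) : s < newtonSlope p z' := by
  have hz : p.eval z ≠ 0 := orderTop_ne_top.1 hlt.ne_top
  rw [← order_eq_orderTop_of_ne_zero hz, ← order_eq_orderTop_of_ne_zero hz',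
    WithTop.coe_lt_coe] at hlt
  obtain ⟨j, hj, hjle⟩ : ∃ j ∈ posTaylorSupport p z',
      ((taylor z' p).coeff j).order + j * s ≤ (p.eval z).order := by
    by_contra! hall
    have hgt : ((p.eval z).order : WithTop ℝ) < (p.eval (z' + (z - z'))).orderTop := by
      rw [eval_add_eq_add_sum_taylor, ← addVal_apply]
      refine (addVal ℝ F).map_lt_add
        (by rw [addVal_apply, ← order_eq_orderTop_of_ne_zero hz']; exact WithTop.coe_lt_coe.2 hlt)
        ((addVal ℝ F).map_lt_sum WithTop.coe_ne_top fun j hj => ?_)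
      have hqj : (taylor z' p).coeff j ≠ 0 := mem_support_iff.1 (Finset.mem_of_mem_erase hj)
      exact (WithTop.coe_lt_coe.2 (hall j hj)).trans_le
        (le_orderTop_mul_pow (order_eq_orderTop_of_ne_zero hqj).le hs j)
    rw [add_sub_cancel] at hgt
    exact hgt.ne (order_eq_orderTop_of_ne_zero hz)
  have hj0 : (0 : ℝ) < j := Nat.cast_pos.2 (Nat.pos_of_ne_zero (Finset.ne_of_mem_erase hj))
  have := order_eval_le_add_newtonSlope hj
  exact lt_of_mul_lt_mul_left (by linarith) hj0.le

theorem exists_lt_orderTop_eval_add [IsAlgClosed F] (hp : 0 < p.natDegree) {z : F⟦ℝ⟧}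
    (hz : p.eval z ≠ 0) :
    ∃ h : F⟦ℝ⟧, h.orderTop = newtonSlope p z ∧
      ((p.eval z).order : WithTop ℝ) < (p.eval (z + h)).orderTop := by
  set V := (p.eval z).order
  have hbound : ∀ j : ℕ, ((V - j * newtonSlope p z : ℝ) : WithTop ℝ) ≤
      ((taylor z p).coeff j).orderTop := by
    intro j
    rcases eq_or_ne j 0 with rfl | hj0
    · simp [V, taylor_coeff_zero, order_eq_orderTop_of_ne_zero hz]
    rcases eq_or_ne ((taylor z p).coeff j) 0 with hqj | hqj
    · simp [hqj]
    rw [← order_eq_orderTop_of_ne_zero hqj, WithTop.coe_le_coe, sub_le_iff_le_add]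
    exact order_eval_le_add_newtonSlope (Finset.mem_erase.2 ⟨hj0, mem_support_iff.2 hqj⟩)
  obtain ⟨j, hj, hjeq⟩ := exists_order_eval_eq_add_newtonSlope hp z
  obtain ⟨c, hc, hlt⟩ := exists_lt_orderTop_eval_single hbound (Finset.ne_of_mem_erase hj).symm
    (by simpa [coeff_initialForm, taylor_coeff_zero, V] using coeff_order_eq_zero.not.2 hz)
    (by
      rw [coeff_initialForm, show V - j * newtonSlope p z = ((taylor z p).coeff j).order by
        linarith]
      exact coeff_order_eq_zero.not.2 (mem_support_iff.1 (Finset.mem_of_mem_erase hj)))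
  exact ⟨single (newtonSlope p z) c, orderTop_single hc, by rwa [add_comm, ← taylor_eval]⟩

end NewtonSlope

section NewtonMethod

variable {p : F⟦ℝ⟧[X]}

def NewtonRefines (p : F⟦ℝ⟧[X]) (a b : F⟦ℝ⟧) : Prop :=
  (newtonSlope p a : WithTop ℝ) ≤ (b - a).orderTop ∧ (p.eval a).orderTop < (p.eval b).orderTop

theorem NewtonRefines.eval_ne_zero {a b : F⟦ℝ⟧} (h : NewtonRefines p a b) : p.eval a ≠ 0 :=
  orderTop_ne_top.1 h.2.ne_top

theorem NewtonRefines.newtonSlope_lt {a b : F⟦ℝ⟧} (h : NewtonRefines p a b)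
    (hb : p.eval b ≠ 0) : newtonSlope p a < newtonSlope p b :=
  lt_newtonSlope hb (by rw [← orderTop_neg, neg_sub]; exact h.1) h.2

theorem NewtonRefines.trans {a b c : F⟦ℝ⟧} (hab : NewtonRefines p a b)
    (hbc : NewtonRefines p b c) : NewtonRefines p a c := by
  refine ⟨?_, hab.2.trans hbc.2⟩
  rw [← sub_add_sub_cancel c b a]
  refine le_trans (le_min ?_ hab.1) min_orderTop_le_orderTop_add
  exact (WithTop.coe_le_coe.2 (hab.newtonSlope_lt hbc.eval_ne_zero).le).trans hbc.1

instance : IsTrans F⟦ℝ⟧ (NewtonRefines p) := ⟨fun _ _ _ => NewtonRefines.trans⟩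

theorem exists_newtonRefines_of_isChain {c : Set F⟦ℝ⟧}
    (hc : IsChain (Relation.ReflGen (NewtonRefines p)) c)
    (hsucc : ∀ x ∈ c, ∃ x' ∈ c, NewtonRefines p x x') :
    ∃ y, ∀ x ∈ c, NewtonRefines p x y := by
  obtain ⟨y, hy⟩ := exists_forall_le_orderTop_sub (fun x : c => x.1) (fun x => newtonSlope p x)
    fun x x' => by
      rcases eq_or_ne x.1 x'.1 with hxx' | hne
      · simp [hxx']
      rcases hc x.2 x'.2 hne with h | h
      · rw [← orderTop_neg, neg_sub]
        exact (WithTop.coe_le_coe.2 (min_le_left _ _)).trans (h.of_ne hne).1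
      · exact (WithTop.coe_le_coe.2 (min_le_right _ _)).trans (h.of_ne hne.symm).1
  refine ⟨y, fun x hx => ⟨hy ⟨x, hx⟩, ?_⟩⟩
  obtain ⟨x', hx', hxx'⟩ := hsucc x hx
  obtain ⟨x'', -, hx'x''⟩ := hsucc x' hx'
  calc (p.eval x).orderTop < (p.eval x').orderTop := hxx'.2
    _ = (p.eval x').order := (order_eq_orderTop_of_ne_zero hx'x''.eval_ne_zero).symm
    _ ≤ (p.eval y).orderTop :=
      le_orderTop_eval_of_le_orderTop_sub hx'x''.eval_ne_zero (hy ⟨x', hx'⟩)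

theorem exists_reflGen_newtonRefines_of_isChain {c : Set F⟦ℝ⟧}
    (hc : IsChain (Relation.ReflGen (NewtonRefines p)) c) :
    ∃ y, ∀ x ∈ c, Relation.ReflGen (NewtonRefines p) x y := by
  by_cases hmax : ∃ m ∈ c, ∀ x ∈ c, Relation.ReflGen (NewtonRefines p) x m
  · obtain ⟨m, -, hm⟩ := hmax
    exact ⟨m, hm⟩
  push Not at hmax
  obtain ⟨y, hy⟩ := exists_newtonRefines_of_isChain hc fun x hx => by
    obtain ⟨x', hx', hnot⟩ := hmax x hx
    have hne : x ≠ x' := fun h => hnot (h ▸ .refl)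
    exact ⟨x', hx', ((hc hx hx' hne).resolve_right hnot).of_ne hne⟩
  exact ⟨y, fun x hx => .single (hy x hx)⟩

theorem exists_maximal_newtonRefines (z₀ : F⟦ℝ⟧) :
    ∃ m, Relation.ReflGen (NewtonRefines p) z₀ m ∧ ∀ y, ¬NewtonRefines p m y := by
  let T := {y // Relation.ReflGen (NewtonRefines p) z₀ y}
  have : Nonempty T := ⟨⟨z₀, .refl⟩⟩
  obtain ⟨m, hm⟩ := exists_maximal_of_nonempty_chains_bounded
    (r := fun a b : T => Relation.ReflGen (NewtonRefines p) a.1 b.1)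
    (fun c hc ⟨x₁, hx₁⟩ => by
      obtain ⟨y, hy⟩ := exists_reflGen_newtonRefines_of_isChain
        (hc.image_of_map_rel _ _ Subtype.val fun _ _ h => h)
      exact ⟨⟨y, _root_.trans x₁.2 (hy _ ⟨x₁, hx₁, rfl⟩)⟩, fun x hx => hy _ ⟨x, hx, rfl⟩⟩)
    _root_.trans
  refine ⟨m, m.2, fun y hy => ?_⟩
  rcases hm ⟨y, _root_.trans m.2 (.single hy)⟩ (.single hy) with _ | hy'
  exacts [hy.2.false, (hy.2.trans hy'.2).false]

theorem exists_isRoot_le_orderTop_sub [IsAlgClosed F] (hp : 0 < p.natDegree) (z₀ : F⟦ℝ⟧) :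
    ∃ r, p.IsRoot r ∧ (newtonSlope p z₀ : WithTop ℝ) ≤ (r - z₀).orderTop := by
  obtain ⟨m, hz₀m, hm⟩ := exists_maximal_newtonRefines (p := p) z₀
  have hroot : p.IsRoot m := by
    by_contra hm0
    obtain ⟨h, hh, hlt⟩ := exists_lt_orderTop_eval_add hp hm0
    refine hm (m + h) ⟨by rw [add_sub_cancel_left, hh], ?_⟩
    rwa [← order_eq_orderTop_of_ne_zero hm0]
  refine ⟨m, hroot, ?_⟩
  rcases hz₀m with _ | h
  exacts [by simp, h.1]

theorem exists_isRoot_order_eq [IsAlgClosed F] {τ V : ℝ}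
    (hp : ∀ j : ℕ, ((V - j * τ : ℝ) : WithTop ℝ) ≤ (p.coeff j).orderTop) {k l : ℕ} (hkl : k ≠ l)
    (hk : (initialForm p τ V).coeff k ≠ 0) (hl : (initialForm p τ V).coeff l ≠ 0) :
    ∃ r, r ≠ 0 ∧ r.order = τ ∧ p.IsRoot r := by
  obtain ⟨c₀, hc₀, hlt⟩ := exists_lt_orderTop_eval_single hp hkl hk hl
  set z₀ := single τ c₀
  suffices ∃ r, p.IsRoot r ∧ (τ : WithTop ℝ) < (r - z₀).orderTop by
    obtain ⟨r, hr, hτ⟩ := this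
    have hr' : r.orderTop = τ := by
      rw [← sub_add_cancel r z₀, orderTop_add_eq_right (by rwa [orderTop_single hc₀]),
        orderTop_single hc₀]
    have hr0 : r ≠ 0 := orderTop_ne_top.1 (by simp [hr'])
    exact ⟨r, hr0, WithTop.coe_injective ((order_eq_orderTop_of_ne_zero hr0).trans hr'), hr⟩
  by_cases hz₀ : p.IsRoot z₀
  · exact ⟨z₀, hz₀, by simp⟩
  have hpdeg : 0 < p.natDegree := by
    have := le_natDegree_of_ne_zero (coeff_ne_zero_of_coeff_initialForm_ne_zero hk)
    have := le_natDegree_of_ne_zero (coeff_ne_zero_of_coeff_initialForm_ne_zero hl)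
    omega
  obtain ⟨r, hr, hdist⟩ := exists_isRoot_le_orderTop_sub hpdeg z₀
  refine ⟨r, hr, lt_of_lt_of_le (WithTop.coe_lt_coe.2 ?_) hdist⟩
  obtain ⟨c₁, hc₁⟩ :=
    exists_orderTop_eval_single_eq hp fun h => hk (by rw [h, Polynomial.coeff_zero])
  exact lt_newtonSlope hz₀ (by rw [← single_sub]; exact orderTop_single_le) (hc₁ ▸ hlt)

end NewtonMethod

section Genericity

variable {σ : Type*} [Infinite F] [Fintype σ]

theorem exists_forall_ne_zero_sum_mul_prod_pow_ne_zero (u : (σ → ℕ) → F)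
    {B₁ B₂ : Finset (σ → ℕ)} (h₁ : ∃ γ ∈ B₁, u γ ≠ 0) (h₂ : ∃ γ ∈ B₂, u γ ≠ 0) :
    ∃ c : σ → F, (∀ i, c i ≠ 0) ∧ ∑ γ ∈ B₁, u γ * ∏ i, c i ^ γ i ≠ 0 ∧
      ∑ γ ∈ B₂, u γ * ∏ i, c i ^ γ i ≠ 0 := by
  classical
  let f : Finset (σ → ℕ) → MvPolynomial σ F := fun B =>
    ∑ γ ∈ B, MvPolynomial.monomial (Finsupp.equivFunOnFinite.symm γ) (u γ)
  have heval : ∀ B c, MvPolynomial.eval c (f B) = ∑ γ ∈ B, u γ * ∏ i, c i ^ γ i := by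
    simp [f, MvPolynomial.eval_monomial, Finsupp.prod_pow]
  have hne : ∀ B, (∃ γ ∈ B, u γ ≠ 0) → f B ≠ 0 := by
    rintro B ⟨γ, hγ, hu⟩ h
    have := congrArg (MvPolynomial.coeff (Finsupp.equivFunOnFinite.symm γ)) h
    simp [f, MvPolynomial.coeff_sum, MvPolynomial.coeff_monomial, hγ, hu] at this
  obtain ⟨c, hc, hne'⟩ :=
    MvPolynomial.exists_forall_ne_zero_eval_ne_zero (mul_ne_zero (hne B₁ h₁) (hne B₂ h₂))
  rw [map_mul, heval, heval] at hne'
  exact ⟨c, hc, left_ne_zero_of_mul hne', right_ne_zero_of_mul hne'⟩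

end Genericity

section MonomialTerm

variable {ι : Type*} [Fintype ι] {a : F⟦ℝ⟧} {z : ι → F⟦ℝ⟧} {w : ι → ℝ}

theorem le_orderTop_mul_prod_pow (hz : ∀ i, (w i : WithTop ℝ) ≤ (z i).orderTop) (γ : ι → ℕ) :
    ((a.order + ∑ i, (γ i : ℝ) * w i : ℝ) : WithTop ℝ) ≤ (a * ∏ i, z i ^ γ i).orderTop := by
  simpa [nsmul_eq_mul] using le_orderTop_mul (coe_order_le_orderTop a)
    (le_orderTop_prod fun i _ => le_orderTop_pow (hz i) (γ i))

theorem coeff_mul_prod_pow (hz : ∀ i, (w i : WithTop ℝ) ≤ (z i).orderTop) (γ : ι → ℕ) :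
    (a * ∏ i, z i ^ γ i).coeff (a.order + ∑ i, (γ i : ℝ) * w i) =
      a.leadingCoeff * ∏ i, (z i).coeff (w i) ^ γ i := by
  have hpow : ∀ i ∈ Finset.univ, ((γ i • w i : ℝ) : WithTop ℝ) ≤ (z i ^ γ i).orderTop :=
    fun i _ => le_orderTop_pow (hz i) (γ i)
  simp_rw [← nsmul_eq_mul]
  rw [coeff_mul_of_le_orderTop (coe_order_le_orderTop a) (le_orderTop_prod hpow),
    coeff_prod_of_le_orderTop hpow, leadingCoeff_eq]
  simp_rw [coeff_pow_of_le_orderTop (hz _)]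

theorem orderTop_mul_prod_pow (ha : a ≠ 0) (hz : ∀ i, z i ≠ 0) (γ : ι → ℕ) :
    (a * ∏ i, z i ^ γ i).orderTop = ((a.order + ∑ i, (γ i : ℝ) * (z i).order : ℝ) : WithTop ℝ) := by
  have hz' : ∀ i, ((z i).order : WithTop ℝ) ≤ (z i).orderTop := fun i => coe_order_le_orderTop _
  refine le_antisymm (orderTop_le_of_coeff_ne_zero ?_) (le_orderTop_mul_prod_pow hz' γ)
  rw [coeff_mul_prod_pow hz']
  exact mul_ne_zero (leadingCoeff_ne_zero.2 ha)
    (Finset.prod_ne_zero_iff.2 fun i _ => pow_ne_zero _ (coeff_order_eq_zero.not.2 (hz i)))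

end MonomialTerm

section CoordinateLine

variable {R σ : Type*} [CommSemiring R] [Fintype σ] [DecidableEq σ]

noncomputable def lineRestriction (A : Finset (σ → ℕ)) (a : (σ → ℕ) → R) (z : σ → R) (i₀ : σ) :
    R[X] :=
  ∑ γ ∈ A, C (a γ * ∏ i, z i ^ γ i) * X ^ γ i₀

theorem eval_lineRestriction (A : Finset (σ → ℕ)) (a : (σ → ℕ) → R) (z : σ → R) (i₀ : σ)
    (t : R) : (lineRestriction A a z i₀).eval t =
      ∑ γ ∈ A, a γ * ∏ i, Function.update z i₀ (t * z i₀) i ^ γ i := by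
  simp only [lineRestriction, eval_finsetSum, eval_mul, eval_C, eval_pow, eval_X]
  refine Finset.sum_congr rfl fun γ _ => ?_
  rw [← Finset.mul_prod_erase _ _ (Finset.mem_univ i₀), ← Finset.mul_prod_erase _
    (fun i => Function.update z i₀ (t * z i₀) i ^ γ i) (Finset.mem_univ i₀),
    Function.update_self, mul_pow]
  have hrest : ∏ i ∈ Finset.univ.erase i₀, Function.update z i₀ (t * z i₀) i ^ γ i =
      ∏ i ∈ Finset.univ.erase i₀, z i ^ γ i :=
    Finset.prod_congr rfl fun i hi => by rw [Function.update_of_ne (Finset.ne_of_mem_erase hi)]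
  rw [hrest]
  ring

omit [DecidableEq σ] in
theorem coeff_lineRestriction (A : Finset (σ → ℕ)) (a : (σ → ℕ) → R) (z : σ → R) (i₀ : σ)
    (m : ℕ) : (lineRestriction A a z i₀).coeff m =
      ∑ γ ∈ A with γ i₀ = m, a γ * ∏ i, z i ^ γ i := by
  simp only [lineRestriction, finsetSum_coeff, coeff_C_mul_X_pow, Finset.sum_filter, eq_comm]

end CoordinateLine

theorem exists_corner_of_sum_eq_zero {n : ℕ} {A : Finset (Fin n → ℕ)} (hA : A.Nonempty)
    {a : (Fin n → ℕ) → K} (ha : ∀ α ∈ A, a α ≠ 0) {z : Fin n → K} (hz : ∀ i, z i ≠ 0)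
    (hzero : ∑ α ∈ A, a α * ∏ i, z i ^ α i = 0) :
    ∃ α ∈ A, ∃ β ∈ A, α ≠ β ∧
      Kval (a α) + ∑ i, (α i : ℝ) * Kval (z i) = Kval (a β) + ∑ i, (β i : ℝ) * Kval (z i) ∧
      ∀ γ ∈ A, Kval (a γ) + ∑ i, (γ i : ℝ) * Kval (z i) ≤
        Kval (a α) + ∑ i, (α i : ℝ) * Kval (z i) := by
  set φ : (Fin n → ℕ) → ℝ := fun γ => Kval (a γ) + ∑ i, (γ i : ℝ) * Kval (z i)
  have hv : ∀ γ ∈ A, addVal ℝ ℂ (a γ * ∏ i, z i ^ γ i) = ((-φ γ : ℝ) : WithTop ℝ) := by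
    intro γ hγ
    rw [addVal_apply, orderTop_mul_prod_pow (ha γ hγ) hz]
    simp [φ, Kval, Finset.sum_neg_distrib, add_comm]
  obtain ⟨α, hα, hmax⟩ := A.exists_max_image φ hA
  obtain ⟨β, hβ, hne, heq⟩ := (addVal ℝ ℂ).exists_ne_map_eq_of_sum_eq_zero hzero hα
    (by rw [hv α hα]; exact WithTop.coe_ne_top) fun γ hγ => by
      rw [hv α hα, hv γ hγ, WithTop.coe_le_coe]
      linarith [hmax γ hγ]
  rw [hv β hβ, hv α hα, WithTop.coe_inj] at heq
  exact ⟨α, hα, β, hβ, hne.symm, by linarith, hmax⟩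

section MonomialAtSingle

variable {n : ℕ} (a : K) (x : Fin n → ℝ) (c : Fin n → ℂ) (γ : Fin n → ℕ)

theorem order_add_sum_mul_neg :
    a.order + ∑ i, (γ i : ℝ) * -x i = -(Kval a + ∑ i, (γ i : ℝ) * x i) := by
  simp [Kval, Finset.sum_neg_distrib, add_comm]

theorem le_orderTop_mul_prod_single_pow :
    ((-(Kval a + ∑ i, (γ i : ℝ) * x i) : ℝ) : WithTop ℝ) ≤
      (a * ∏ i, single (-x i) (c i) ^ γ i).orderTop := by
  rw [← order_add_sum_mul_neg]
  exact le_orderTop_mul_prod_pow (fun i => orderTop_single_le) γ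

theorem coeff_mul_prod_single_pow_of_le {M : ℝ} (hM : Kval a + ∑ i, (γ i : ℝ) * x i ≤ M) :
    (a * ∏ i, single (-x i) (c i) ^ γ i).coeff (-M) =
      if Kval a + ∑ i, (γ i : ℝ) * x i = M then a.leadingCoeff * ∏ i, c i ^ γ i else 0 := by
  split_ifs with hφ
  · rw [← hφ, ← order_add_sum_mul_neg, coeff_mul_prod_pow fun i => orderTop_single_le]
    simp
  · exact coeff_eq_zero_of_lt_orderTop
      ((WithTop.coe_lt_coe.2 (neg_lt_neg (hM.lt_of_ne hφ))).trans_le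
        (le_orderTop_mul_prod_single_pow a x c γ))

end MonomialAtSingle

theorem exists_sum_eq_zero_of_corner {n : ℕ} {A : Finset (Fin n → ℕ)} {a : (Fin n → ℕ) → K}
    (ha : ∀ α ∈ A, a α ≠ 0) {x : Fin n → ℝ} {α β : Fin n → ℕ} (hα : α ∈ A) (hβ : β ∈ A)
    (hne : α ≠ β)
    (heq : Kval (a α) + ∑ i, (α i : ℝ) * x i = Kval (a β) + ∑ i, (β i : ℝ) * x i)
    (hmax : ∀ γ ∈ A, Kval (a γ) + ∑ i, (γ i : ℝ) * x i ≤ Kval (a α) + ∑ i, (α i : ℝ) * x i) :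
    ∃ z : Fin n → K, (∀ i, z i ≠ 0) ∧ ∑ γ ∈ A, a γ * ∏ i, z i ^ γ i = 0 ∧
      ∀ i, x i = Kval (z i) := by
  classical
  set φ : (Fin n → ℕ) → ℝ := fun γ => Kval (a γ) + ∑ i, (γ i : ℝ) * x i
  obtain ⟨i₀, hi₀⟩ := Function.ne_iff.1 hne
  let B : ℕ → Finset (Fin n → ℕ) := fun m => {γ ∈ A | γ i₀ = m ∧ φ γ = φ α}
  obtain ⟨c, hc, hcα, hcβ⟩ := exists_forall_ne_zero_sum_mul_prod_pow_ne_zero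
    (fun γ => (a γ).leadingCoeff) (B₁ := B (α i₀)) (B₂ := B (β i₀))
    ⟨α, by simp [B, hα], leadingCoeff_ne_zero.2 (ha α hα)⟩
    ⟨β, by simp [B, hβ, φ, heq], leadingCoeff_ne_zero.2 (ha β hβ)⟩
  set z : Fin n → K := fun i => single (-x i) (c i)
  set P := lineRestriction A a z i₀
  have hbound : ∀ j : ℕ, ((-φ α - j * 0 : ℝ) : WithTop ℝ) ≤ (P.coeff j).orderTop := by
    intro j
    rw [coeff_lineRestriction, mul_zero, sub_zero, ← addVal_apply]
    refine (addVal ℝ ℂ).map_le_sum fun γ hγ => ?_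
    exact (WithTop.coe_le_coe.2 (neg_le_neg (hmax γ (Finset.mem_filter.1 hγ).1))).trans
      (le_orderTop_mul_prod_single_pow (a γ) x c γ)
  have hinit : ∀ m, (initialForm P 0 (-φ α)).coeff m =
      ∑ γ ∈ B m, (a γ).leadingCoeff * ∏ i, c i ^ γ i := by
    intro m
    rw [coeff_initialForm, mul_zero, sub_zero, coeff_lineRestriction, HahnSeries.coeff_sum,
      Finset.sum_congr rfl fun γ hγ =>
        coeff_mul_prod_single_pow_of_le (a γ) x c γ (hmax γ (Finset.mem_filter.1 hγ).1),
      Finset.sum_ite, Finset.sum_const_zero, add_zero, Finset.filter_filter]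
  obtain ⟨r, hr0, hrord, hroot⟩ := exists_isRoot_order_eq hbound hi₀ (by rwa [hinit])
    (by rwa [hinit])
  refine ⟨Function.update z i₀ (r * z i₀), fun i => ?_, ?_, fun i => ?_⟩
  · rcases eq_or_ne i i₀ with rfl | hi
    · simp [z, hr0, hc]
    · simp [z, hi, hc]
  · rw [← eval_lineRestriction]
    exact hroot
  · rcases eq_or_ne i i₀ with rfl | hi
    · rw [Function.update_self, Kval, order_mul hr0 (single_ne_zero (hc i)), hrord,
        order_single (hc i)]
      ring
    · rw [Function.update_of_ne hi, Kval, order_single (hc i), neg_neg]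

end Kapranov

open Kapranov in
theorem kapranov_general (n : ℕ) (A : Finset (Fin n → ℕ)) (hA : A.Nonempty)
    (a : (Fin n → ℕ) → K) (ha : ∀ α ∈ A, a α ≠ 0) :
    {x : Fin n → ℝ | ∃ z : Fin n → K, (∀ i, z i ≠ 0) ∧
        (∑ α ∈ A, a α * ∏ i, (z i) ^ (α i)) = 0 ∧ ∀ i, x i = Kval (z i)}
      = {x : Fin n → ℝ | ∃ α ∈ A, ∃ β ∈ A, α ≠ β ∧
          Kval (a α) + ∑ i, (α i : ℝ) * x i = Kval (a β) + ∑ i, (β i : ℝ) * x i ∧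
          ∀ γ ∈ A, Kval (a γ) + ∑ i, (γ i : ℝ) * x i ≤
            Kval (a α) + ∑ i, (α i : ℝ) * x i} := by
  ext x
  constructor
  · rintro ⟨z, hz, hzero, hx⟩
    obtain rfl : x = fun i => Kval (z i) := funext hx
    exact exists_corner_of_sum_eq_zero hA ha hz hzero
  · rintro ⟨α, hα, β, hβ, hne, heq, hmax⟩
    exact exists_sum_eq_zero_of_corner ha hα hβ hne heq hmax

/-- Kapranov's theorem: the image under coordinatewise valuation of the zero locus in
`(K∖{0})ⁿ` of a polynomial `g = Σ_{α∈A} a_α X^α` with nonzero coefficients equals the corner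
locus of the tropical polynomial `x ↦ max_{α∈A} (val(a_α) + ⟨α,x⟩)`. -/
theorem kapranov (n : ℕ) (hn : 1 ≤ n) (A : Finset (Fin n → ℕ)) (hA : A.Nonempty)
    (a : (Fin n → ℕ) → K) (ha : ∀ α ∈ A, a α ≠ 0) :
    {x : Fin n → ℝ | ∃ z : Fin n → K, (∀ i, z i ≠ 0) ∧
        (∑ α ∈ A, a α * ∏ i, (z i) ^ (α i)) = 0 ∧ ∀ i, x i = Kval (z i)}
      = {x : Fin n → ℝ | ∃ α ∈ A, ∃ β ∈ A, α ≠ β ∧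
          Kval (a α) + ∑ i, (α i : ℝ) * x i = Kval (a β) + ∑ i, (β i : ℝ) * x i ∧
          ∀ γ ∈ A, Kval (a γ) + ∑ i, (γ i : ℝ) * x i ≤
            Kval (a α) + ∑ i, (α i : ℝ) * x i} :=
  kapranov_general n A hA a ha
end

section
/- One has the equality of subsets of ℝ²: {(arg z, arg w) : z, w ∈ ℂ∖{0}, 1 + z + w = 0, 0 < arg z < π} = {(α,β) ∈ ℝ² : 0 < α < π and −π < β < α − π}. -/
/-!
For `0 < arg z < π` the point `z` lies in the open upper half plane, and so does `1 + z`;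
then `w = -(1 + z)` has `arg w = arg (1 + z) - π`. Translating `z` to the right by `1` strictly
decreases its argument, so `(arg z, arg w)` lies in the triangle. Conversely, for
`0 < γ < α < π` the rays from `0` at angle `α` and from `-1` at angle `γ` meet in a point `z`
(explicitly, by the law of sines), and `w = -(1 + z)` then has argument `γ - π`.
-/

open Complex

namespace Complex

theorem im_pos_of_arg_pos_of_arg_lt_pi {z : ℂ} (h₀ : 0 < arg z) (hπ : arg z < Real.pi) :
    0 < z.im := by
  have hz : z ≠ 0 := by rintro rfl; simp at h₀
  rw [← norm_mul_sin_arg]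
  exact mul_pos (norm_pos_iff.mpr hz) (Real.sin_pos_of_pos_of_lt_pi h₀ hπ)

theorem arg_pos_of_im_pos {z : ℂ} (hz : 0 < z.im) : 0 < arg z :=
  (arg_nonneg_iff.mpr hz.le).lt_of_ne fun h => hz.ne' (arg_eq_zero_iff.mp h.symm).2

theorem norm_mul_norm_mul_sin_arg_sub_arg (u v : ℂ) :
    ‖u‖ * ‖v‖ * Real.sin (arg v - arg u) = u.re * v.im - u.im * v.re := by
  rw [Real.sin_sub, ← norm_mul_cos_arg u, ← norm_mul_sin_arg u, ← norm_mul_cos_arg v,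
    ← norm_mul_sin_arg v]
  ring

/-- A positive cross product `u × v` means `v` is obtained from `u` by a counterclockwise turn
by less than `π`; for `v` in the closed upper half plane this turn does not cross the cut. -/
theorem arg_lt_arg_of_cross_pos {u v : ℂ} (hv : 0 ≤ v.im)
    (h : 0 < u.re * v.im - u.im * v.re) : arg u < arg v := by
  have hsin : 0 < Real.sin (arg v - arg u) := by
    rw [← norm_mul_norm_mul_sin_arg_sub_arg] at h
    exact pos_of_mul_pos_right h (by positivity)
  by_contra! hle
  have : Real.sin (arg v - arg u) ≤ 0 :=
    Real.sin_nonpos_of_nonpos_of_neg_pi_le (by linarith)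
      (by linarith [arg_nonneg_iff.mpr hv, arg_le_pi u])
  linarith

theorem arg_one_add_lt_arg {z : ℂ} (hz : 0 < z.im) : arg (1 + z) < arg z :=
  arg_lt_arg_of_cross_pos hz.le
    (by simp only [add_re, one_re, add_im, one_im, zero_add, sub_pos]; linear_combination hz)

theorem exists_arg_eq_and_arg_one_add_eq {α γ : ℝ} (hγ : 0 < γ) (hγα : γ < α)
    (hα : α < Real.pi) : ∃ z : ℂ, arg z = α ∧ arg (1 + z) = γ := by
  have hsin_sub : 0 < Real.sin (α - γ) :=
    Real.sin_pos_of_pos_of_lt_pi (by linarith) (by linarith [hγ])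
  have hsinγ : 0 < Real.sin γ := Real.sin_pos_of_pos_of_lt_pi hγ (by linarith)
  have hsinα : 0 < Real.sin α := Real.sin_pos_of_pos_of_lt_pi (by linarith) hα
  have law_of_sines : Complex.sin (α - γ) + (cos α + sin α * I) * sin γ
      = (cos γ + sin γ * I) * sin α := by
    rw [Complex.sin_sub]; ring
  refine ⟨((Real.sin γ / Real.sin (α - γ) : ℝ) : ℂ) * (cos α + sin α * I), ?_, ?_⟩
  · exact arg_mul_cos_add_sin_mul_I (div_pos hsinγ hsin_sub) ⟨by linarith, hα.le⟩
  · have hsin_sub' : Complex.sin (α - γ) ≠ 0 := by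
      rw [← ofReal_sub, ← ofReal_sin]; exact_mod_cast hsin_sub.ne'
    have : 1 + ((Real.sin γ / Real.sin (α - γ) : ℝ) : ℂ) * (cos α + sin α * I)
        = ((Real.sin α / Real.sin (α - γ) : ℝ) : ℂ) * (cos γ + sin γ * I) := by
      push_cast
      field_simp
      linear_combination law_of_sines
    rw [this]
    exact arg_mul_cos_add_sin_mul_I (div_pos hsinα hsin_sub) ⟨by linarith, by linarith⟩

end Complex

/-- The part of the coamoeba of the line `1 + z + w = 0` lying over `0 < arg z < π`
is exactly the open triangle `{(α,β) : 0 < α < π, -π < β < α - π}`. -/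
theorem coamoeba_line_triangle :
    {p : ℝ × ℝ | ∃ z w : ℂ, z ≠ 0 ∧ w ≠ 0 ∧ 1 + z + w = 0 ∧
        p.1 = Complex.arg z ∧ p.2 = Complex.arg w ∧
        0 < Complex.arg z ∧ Complex.arg z < Real.pi}
      = {p : ℝ × ℝ | 0 < p.1 ∧ p.1 < Real.pi ∧ -Real.pi < p.2 ∧ p.2 < p.1 - Real.pi} := by
  ext ⟨α, β⟩
  simp only [Set.mem_ofPred_eq]
  constructor
  · rintro ⟨z, w, -, -, hzw, rfl, rfl, h₀, hπ⟩
    have hz : 0 < z.im := im_pos_of_arg_pos_of_arg_lt_pi h₀ hπ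
    have h1z : 0 < (1 + z).im := by simpa using hz
    obtain rfl : w = -(1 + z) := by linear_combination hzw
    rw [arg_neg_eq_arg_sub_pi_of_im_pos h1z]
    have := arg_pos_of_im_pos h1z
    have := arg_one_add_lt_arg hz
    exact ⟨h₀, hπ, by linarith, by linarith⟩
  · rintro ⟨h₀, hπ, hβ, hβα⟩
    obtain ⟨z, rfl, hγ⟩ :=
      exists_arg_eq_and_arg_one_add_eq (γ := β + Real.pi) (by linarith) (by linarith) hπ
    have h1z : 0 < (1 + z).im :=
      im_pos_of_arg_pos_of_arg_lt_pi (by linarith) (by linarith)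
    refine ⟨z, -(1 + z), by rintro rfl; simp at h₀, neg_ne_zero.mpr ?_, by ring, rfl, ?_, h₀, hπ⟩
    · rintro h; simp [h] at h1z
    · rw [arg_neg_eq_arg_sub_pi_of_im_pos h1z, hγ]; ring
end

section
/- Let H = {(z,w) ∈ (ℂ∖{0})² : 1 + z + w = 0}. The closure in 𝕋² of Ārg(H) equals the image under the projection ℝ² → 𝕋² of the union of the two closed triangles with vertex sets {(0,−π),(π,−π),(π,0)} and {(0,π),(−π,π),(−π,0)}. -/
/-!
For `(z, w) ∈ H` write `α = arg z`, `β = arg w`. Since `w = -1 - z`, one has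
`‖z‖ ‖w‖ sin (β - α) = Im z`, so for `Im z > 0` the sign of `sin (β - α)` confines `(α, β)` to
the first triangle; conversely, on its interior the law of sines produces moduli realising any
prescribed pair of arguments. Complex conjugation negates both arguments and swaps the two
triangles, and the real points of `H` land on vertices modulo `2π`. Since each closed triangle is
compact and is the closure of its interior, the closure of the coamoeba is their image.
-/

instance : Fact (0 < 2 * Real.pi) := ⟨by positivity⟩

open Set Complex ComplexConjugate
open scoped Real

namespace CoamoebaLine

def triangle : Set (ℝ × ℝ) := {p | p.1 ≤ π ∧ -π ≤ p.2 ∧ p.2 ≤ p.1 - π}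

def openTriangle : Set (ℝ × ℝ) := {p | p.1 < π ∧ -π < p.2 ∧ p.2 < p.1 - π}

/-- The coamoeba of `H` lifted to the fundamental domain `(-π, π]²`. -/
def argPairs : Set (ℝ × ℝ) :=
  {p | ∃ z w : ℂ, z ≠ 0 ∧ w ≠ 0 ∧ 1 + z + w = 0 ∧ (arg z, arg w) = p}

theorem convex_triangle : Convex ℝ triangle := by
  rintro p ⟨hp₁, hp₂, hp₃⟩ q ⟨hq₁, hq₂, hq₃⟩ a b ha hb hab
  simp only [triangle, mem_ofPred_eq, Prod.fst_add, Prod.snd_add, Prod.smul_fst, Prod.smul_snd,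
    smul_eq_mul]
  refine ⟨?_, ?_, ?_⟩ <;> nlinarith

theorem convexHull_eq_triangle :
    convexHull ℝ ({(0, -π), (π, -π), (π, 0)} : Set (ℝ × ℝ)) = triangle := by
  have hπ := Real.pi_pos
  refine (convexHull_min ?_ convex_triangle).antisymm ?_
  · rintro p (rfl | rfl | rfl) <;> simp only [triangle, mem_ofPred_eq] <;>
      refine ⟨?_, ?_, ?_⟩ <;> linarith
  · rintro ⟨x, y⟩ ⟨hx, hy, hxy⟩
    have := (convex_convexHull ℝ ({(0, -π), (π, -π), (π, 0)} : Set (ℝ × ℝ))).sum_mem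
      (t := Finset.univ) (w := ![(π - x) / π, (x - y - π) / π, (π + y) / π])
      (z := ![(0, -π), (π, -π), (π, 0)])
      (by intro i _; fin_cases i <;> simp <;> apply div_nonneg <;> linarith)
      (by simp [Fin.sum_univ_three]; field_simp; ring)
      (by intro i _; fin_cases i <;> apply subset_convexHull <;> simp)
    convert this using 1
    ext
    · simp [Fin.sum_univ_three]; ring
    · simp [Fin.sum_univ_three]

theorem triangle_subset_closure_openTriangle : triangle ⊆ closure openTriangle := by
  rintro p ⟨hp₁, hp₂, hp₃⟩
  have hπ := Real.pi_pos
  have hseg : openSegment ℝ (3 * π / 4, -3 * π / 4) p ⊆ openTriangle := by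
    rintro _ ⟨a, b, ha, hb, hab, rfl⟩
    simp only [openTriangle, mem_ofPred_eq, Prod.fst_add, Prod.snd_add, Prod.smul_fst,
      Prod.smul_snd, smul_eq_mul]
    refine ⟨?_, ?_, ?_⟩ <;> nlinarith
  exact closure_mono hseg (segment_subset_closure_openSegment (right_mem_segment ℝ _ _))

theorem isCompact_triangle : IsCompact triangle :=
  convexHull_eq_triangle ▸ (toFinite _).isCompact_convexHull ℝ

theorem norm_mul_norm_mul_sin_arg_sub {z w : ℂ} (hz : z ≠ 0) (hw : w ≠ 0) (h : 1 + z + w = 0) :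
    ‖z‖ * ‖w‖ * Real.sin (arg w - arg z) = z.im := by
  have hw' : w = -1 - z := by linear_combination h
  have hz₀ : ‖z‖ ≠ 0 := norm_ne_zero_iff.mpr hz
  have hw₀ : ‖w‖ ≠ 0 := norm_ne_zero_iff.mpr hw
  rw [Real.sin_sub, sin_arg, sin_arg, cos_arg hz, cos_arg hw]
  field_simp
  subst hw'
  simp only [sub_re, sub_im, neg_re, neg_im, one_re, one_im]
  ring

theorem mem_triangle_of_im_pos {z w : ℂ} (hz : z ≠ 0) (hw : w ≠ 0) (h : 1 + z + w = 0)
    (him : 0 < z.im) : (arg z, arg w) ∈ triangle := by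
  have hwim : w.im < 0 := by
    have := congrArg im h
    simp only [add_im, one_im, zero_im] at this
    linarith
  have hsin : 0 < Real.sin (arg w - arg z) := by
    rw [← norm_mul_norm_mul_sin_arg_sub hz hw h] at him
    exact pos_of_mul_pos_right him (by positivity)
  refine ⟨arg_le_pi z, (neg_pi_lt_arg w).le, ?_⟩
  by_contra! hlt
  have hβ : arg w < 0 := arg_neg_iff.mpr hwim
  have hα : 0 ≤ arg z := arg_nonneg_iff.mpr him.le
  linarith [Real.sin_nonpos_of_nonpos_of_neg_pi_le (by linarith : arg w - arg z ≤ 0) (by linarith)]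

theorem sin_sub_sub_sin_mul_add_sin_mul (α β : ℂ) :
    sin (β - α) - sin β * (cos α + sin α * I) + sin α * (cos β + sin β * I) = 0 := by
  rw [sin_sub]
  ring

theorem openTriangle_subset_argPairs : openTriangle ⊆ argPairs := by
  rintro ⟨α, β⟩ ⟨hα, hβ, hαβ⟩
  have hπ := Real.pi_pos
  have hsinα : 0 < Real.sin α := Real.sin_pos_of_pos_of_lt_pi (by linarith) hα
  have hsinβ : Real.sin β < 0 := Real.sin_neg_of_neg_of_neg_pi_lt (by linarith) hβ
  have hD : 0 < Real.sin (β - α) := by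
    rw [← Real.sin_add_two_pi]
    exact Real.sin_pos_of_pos_of_lt_pi (by linarith) (by linarith)
  -- the moduli of `z` and `w` given by the law of sines in the triangle `0, 1, -w`
  have hr : 0 < -Real.sin β / Real.sin (β - α) := div_pos (neg_pos.mpr hsinβ) hD
  have hs : 0 < Real.sin α / Real.sin (β - α) := div_pos hsinα hD
  refine ⟨_, _, ?_, ?_, ?_, Prod.ext (arg_mul_cos_add_sin_mul_I hr ⟨by linarith, hα.le⟩)
    (arg_mul_cos_add_sin_mul_I hs ⟨hβ, by linarith⟩)⟩
  · exact mul_ne_zero (ofReal_ne_zero.mpr hr.ne') (cos_add_sin_I α ▸ exp_ne_zero _)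
  · exact mul_ne_zero (ofReal_ne_zero.mpr hs.ne') (cos_add_sin_I β ▸ exp_ne_zero _)
  · have hD' : (Real.sin (β - α) : ℂ) ≠ 0 := ofReal_ne_zero.mpr hD.ne'
    push_cast at hD' ⊢
    field_simp
    linear_combination sin_sub_sub_sin_mul_add_sin_mul α β

theorem neg_mem_argPairs {p : ℝ × ℝ} (hp : p ∈ argPairs) (h₁ : p.1 ≠ π) (h₂ : p.2 ≠ π) :
    -p ∈ argPairs := by
  obtain ⟨z, w, hz, hw, h, rfl⟩ := hp
  refine ⟨conj z, conj w, by simpa, by simpa, by simpa using congrArg conj h, ?_⟩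
  simp_all [arg_conj]

theorem neg_openTriangle_subset_argPairs : -openTriangle ⊆ argPairs := by
  intro p hp
  have hp' : -p ∈ openTriangle := hp
  have hπ := Real.pi_pos
  simpa using neg_mem_argPairs (openTriangle_subset_argPairs hp') hp'.1.ne
    (by linarith [hp'.1, hp'.2.2])

/-- The extra point `(π, π)`, coming from `z = w = -1/2`, is `(π, -π)` on the torus. -/
theorem argPairs_subset_triangle_union : argPairs ⊆ triangle ∪ -triangle ∪ {(π, π)} := by
  rintro _ ⟨z, w, hz, hw, h, rfl⟩
  have hre : 1 + z.re + w.re = 0 := by simpa using congrArg re h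
  have him : z.im + w.im = 0 := by simpa using congrArg im h
  rcases lt_trichotomy z.im 0 with hneg | hzero | hpos
  · have hconj := mem_triangle_of_im_pos (z := conj z) (w := conj w) (by simpa) (by simpa)
      (by simpa using congrArg conj h) (by simpa using hneg)
    have hz' : arg z ≠ π := fun h' => hneg.ne (arg_eq_pi_iff.mp h').2
    have hw' : arg w ≠ π := fun h' => by linarith [(arg_eq_pi_iff.mp h').2]
    refine Or.inl (Or.inr ?_)
    simpa [arg_conj, hz', hw'] using hconj
  · have hwim : w.im = 0 := by linarith
    rcases le_or_gt 0 z.re with hzre | hzre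
    · have hzarg : arg z = 0 := arg_eq_zero_iff.mpr ⟨hzre, hzero⟩
      have hwarg : arg w = π := arg_eq_pi_iff.mpr ⟨by linarith, hwim⟩
      refine Or.inl (Or.inr ?_)
      simp [hzarg, hwarg, triangle, Real.pi_pos.le]
    · have hzarg : arg z = π := arg_eq_pi_iff.mpr ⟨hzre, hzero⟩
      rcases le_or_gt 0 w.re with hwre | hwre
      · have hwarg : arg w = 0 := arg_eq_zero_iff.mpr ⟨hwre, hwim⟩
        refine Or.inl (Or.inl ?_)
        simp [hzarg, hwarg, triangle, Real.pi_pos.le]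
      · have hwarg : arg w = π := arg_eq_pi_iff.mpr ⟨hwre, hwim⟩
        simp [hzarg, hwarg]
  · exact Or.inl (Or.inl (mem_triangle_of_im_pos hz hw h hpos))

noncomputable def toTorus (q : ℝ × ℝ) : AddCircle (2 * π) × AddCircle (2 * π) :=
  ((q.1 : AddCircle (2 * π)), (q.2 : AddCircle (2 * π)))

theorem continuous_toTorus : Continuous toTorus :=
  ((AddCircle.continuous_mk' _).comp continuous_fst).prodMk
    ((AddCircle.continuous_mk' _).comp continuous_snd)

theorem toTorus_image_argPairs_subset :
    toTorus '' argPairs ⊆ toTorus '' (triangle ∪ -triangle) := by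
  rintro _ ⟨p, hp, rfl⟩
  rcases argPairs_subset_triangle_union hp with hp | rfl
  · exact mem_image_of_mem _ hp
  · have hπ : ((-π : ℝ) : AddCircle (2 * π)) = (π : ℝ) := by
      rw [← AddCircle.coe_add_period]
      ring_nf
    exact ⟨(π, -π), Or.inl ⟨le_rfl, le_rfl, by linarith [Real.pi_pos]⟩, by simp [toTorus, hπ]⟩

theorem setOf_arg_eq_toTorus_image :
    {θ : AddCircle (2 * π) × AddCircle (2 * π) | ∃ z w : ℂ, z ≠ 0 ∧ w ≠ 0 ∧ 1 + z + w = 0 ∧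
      θ.1 = (arg z : AddCircle (2 * π)) ∧ θ.2 = (arg w : AddCircle (2 * π))}
      = toTorus '' argPairs := by
  ext θ
  constructor
  · rintro ⟨z, w, hz, hw, h, h₁, h₂⟩
    exact ⟨_, ⟨z, w, hz, hw, h, rfl⟩, Prod.ext h₁.symm h₂.symm⟩
  · rintro ⟨_, ⟨z, w, hz, hw, h, rfl⟩, rfl⟩
    exact ⟨z, w, hz, hw, h, rfl, rfl⟩

end CoamoebaLine

open CoamoebaLine in
/-- The closure in `𝕋² = (ℝ/2πℤ)²` of the coamoeba of the line `H = {1 + z + w = 0}` is the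
image under the projection `ℝ² → 𝕋²` of the union of the two closed triangles with vertices
`{(0,-π), (π,-π), (π,0)}` and `{(0,π), (-π,π), (-π,0)}`. -/
theorem closure_coamoeba_line
    (ArgH : Set (AddCircle (2 * Real.pi) × AddCircle (2 * Real.pi)))
    (hArgH : ArgH = {θ | ∃ z w : ℂ, z ≠ 0 ∧ w ≠ 0 ∧ 1 + z + w = 0 ∧
        θ.1 = ((Complex.arg z : ℝ) : AddCircle (2 * Real.pi)) ∧
        θ.2 = ((Complex.arg w : ℝ) : AddCircle (2 * Real.pi))}) :
    closure ArgH
      = (fun q : ℝ × ℝ =>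
          (((q.1 : ℝ) : AddCircle (2 * Real.pi)), ((q.2 : ℝ) : AddCircle (2 * Real.pi)))) ''
        (convexHull ℝ ({(0, -Real.pi), (Real.pi, -Real.pi), (Real.pi, 0)} : Set (ℝ × ℝ)) ∪
          convexHull ℝ ({(0, Real.pi), (-Real.pi, Real.pi), (-Real.pi, 0)} : Set (ℝ × ℝ))) := by
  have hvert : ({(0, π), (-π, π), (-π, 0)} : Set (ℝ × ℝ)) = -{(0, -π), (π, -π), (π, 0)} := by
    simp [neg_insert]
  have hclosure : triangle ∪ -triangle ⊆ closure (openTriangle ∪ -openTriangle) := by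
    rw [closure_union, ← neg_closure]
    exact union_subset_union triangle_subset_closure_openTriangle
      (neg_subset_neg.mpr triangle_subset_closure_openTriangle)
  rw [hArgH, setOf_arg_eq_toTorus_image, hvert, convexHull_neg, convexHull_eq_triangle]
  refine (closure_minimal toTorus_image_argPairs_subset
    ((isCompact_triangle.union isCompact_triangle.neg).image continuous_toTorus).isClosed).antisymm ?_
  calc toTorus '' (triangle ∪ -triangle)
      ⊆ toTorus '' closure (openTriangle ∪ -openTriangle) := image_mono hclosure
    _ ⊆ closure (toTorus '' (openTriangle ∪ -openTriangle)) :=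
      image_closure_subset_closure_image continuous_toTorus
    _ ⊆ closure (toTorus '' argPairs) := closure_mono (image_mono
      (union_subset openTriangle_subset_argPairs neg_openTriangle_subset_argPairs))
end
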